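/- Let ρ be a density matrix on ℂ^d and A, B Hermitian d×d complex matrices. Set C = A − Tr(ρA)·I, D = B − Tr(ρB)·I, and choose the sign s ∈ {+1, −1} such that s·i·Tr(ρ[A,B]) = −|Tr(ρ[A,B])|; let K = (C − s·i·D)(C + s·i·D). Then ΔA² + ΔB² ≥ |Tr(ρ[A,B])| + S(ρ) − ln Tr(exp(−K)), where exp denotes the matrix exponential (Tr exp(−K) is a positive real number since K is Hermitian). -/

import Mathlib

/-!
Since `s` is real, `K = N†N` with `N = C + s·i·D`, so `K` is Hermitian, and expanding the product
gives `Tr(ρK) = ΔA² + ΔB² + s·i·Tr(ρ[A,B]) = ΔA² + ΔB² - |Tr(ρ[A,B])|`. The inequality is therefore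
the Gibbs variational inequality `S(ρ) - ln Tr e^{-H} ≤ Tr(ρH)` for `H = K`.

For the latter, write `ρ = U diag(p) U†` and `H = V diag(μ) V†`. Then `Tr(ρH) = ∑ pᵢ hᵢ` with
`h = Pμ`, where `Pᵢⱼ = |(U†V)ᵢⱼ|²` is doubly stochastic because `U†V` is unitary. The classical
Gibbs inequality gives `S(p) - ln ∑ e^{-hᵢ} ≤ ∑ pᵢ hᵢ`, and Jensen's inequality for `exp` along the
rows of `P` gives `∑ e^{-hᵢ} ≤ ∑ e^{-μⱼ} = Tr e^{-H}` (Peierls' inequality).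
-/

open Matrix Complex
open scoped ComplexOrder

theorem neg_mul_log_le_sub_sub_mul_log {p q : ℝ} (hp : 0 ≤ p) (hq : 0 < q) :
    -(p * Real.log p) ≤ q - p - p * Real.log q := by
  rcases hp.eq_or_lt with rfl | hp
  · simpa using hq.le
  · have h := mul_le_mul_of_nonneg_left (Real.log_le_sub_one_of_pos (div_pos hq hp)) hp.le
    rw [Real.log_div hq.ne' hp.ne', mul_sub, mul_sub, mul_div_cancel₀ q hp.ne'] at h
    linarith

theorem neg_sum_mul_log_sub_log_sum_exp_le {ι : Type*} [Fintype ι] (p h : ι → ℝ)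
    (hp : ∀ i, 0 ≤ p i) (hsum : ∑ i, p i = 1) :
    -(∑ i, p i * Real.log (p i)) - Real.log (∑ i, Real.exp (-h i)) ≤ ∑ i, p i * h i := by
  set Z := ∑ i, Real.exp (-h i)
  have hZ : 0 < Z := Finset.sum_pos (fun i _ => Real.exp_pos _)
    (Finset.nonempty_of_sum_ne_zero (hsum ▸ one_ne_zero))
  have hlog : ∀ i, Real.log (Real.exp (-h i) / Z) = -h i - Real.log Z := fun i => by
    rw [Real.log_div (Real.exp_pos _).ne' hZ.ne', Real.log_exp]
  calc -(∑ i, p i * Real.log (p i)) - Real.log Z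
      ≤ ∑ i, (Real.exp (-h i) / Z - p i - p i * Real.log (Real.exp (-h i) / Z))
          - Real.log Z := by
        rw [← Finset.sum_neg_distrib]
        gcongr with i
        exact neg_mul_log_le_sub_sub_mul_log (hp i) (by positivity)
    _ = ∑ i, p i * h i := by
        have hq : ∑ i, Real.exp (-h i) / Z = 1 := by rw [← Finset.sum_div, div_self hZ.ne']
        simp only [hlog, Finset.sum_sub_distrib, mul_sub, mul_neg, Finset.sum_neg_distrib,
          ← Finset.sum_mul, hq, hsum]
        ring

section Matrix

variable {n : Type*} [Fintype n] [DecidableEq n]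

theorem ConvexOn.sum_map_mulVec_le {s : Set ℝ} {f : ℝ → ℝ} (hf : ConvexOn ℝ s f)
    {P : Matrix n n ℝ} (hP : P ∈ doublyStochastic ℝ n) {x : n → ℝ} (hx : ∀ j, x j ∈ s) :
    ∑ i, f ((P *ᵥ x) i) ≤ ∑ j, f (x j) :=
  calc ∑ i, f ((P *ᵥ x) i) ≤ ∑ i, ∑ j, P i j * f (x j) :=
        Finset.sum_le_sum fun i _ => by
          simpa [mulVec, dotProduct] using hf.map_sum_le
            (fun j _ => nonneg_of_mem_doublyStochastic hP) (sum_row_of_mem_doublyStochastic hP i)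
            (fun j _ => hx j)
    _ = ∑ j, f (x j) := by
        rw [Finset.sum_comm]
        simp_rw [← Finset.sum_mul, sum_col_of_mem_doublyStochastic hP, one_mul]

omit [DecidableEq n] in
theorem sum_normSq_eq_re_mul_star_apply_self (W : Matrix n n ℂ) (i : n) :
    ∑ j, normSq (W i j) = ((W * star W) i i).re := by
  simp [mul_apply, Complex.mul_conj]

theorem map_normSq_mem_doublyStochastic {W : Matrix n n ℂ} (hW : W ∈ unitaryGroup n ℂ) :
    W.map normSq ∈ doublyStochastic ℝ n := by
  refine mem_doublyStochastic_iff_sum.mpr ⟨fun i j => normSq_nonneg _, fun i => ?_, fun j => ?_⟩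
  · simp [sum_normSq_eq_re_mul_star_apply_self, mem_unitaryGroup_iff.mp hW]
  · simpa [mem_unitaryGroup_iff'.mp hW] using sum_normSq_eq_re_mul_star_apply_self (star W) j

theorem mul_diagonal_mul_star_apply_self (W : Matrix n n ℂ) (μ : n → ℝ) (i : n) :
    (W * diagonal (RCLike.ofReal ∘ μ) * star W : Matrix n n ℂ) i i
      = ((W.map normSq *ᵥ μ) i : ℂ) := by
  simp only [mul_apply, diagonal_apply, mul_ite, mul_zero, Finset.sum_ite_eq', Finset.mem_univ,
    if_true, mulVec, dotProduct, map_apply, star_apply, Function.comp_apply, ofReal_sum,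
    ofReal_mul, ← Complex.mul_conj]
  exact Finset.sum_congr rfl fun j _ => by simp only [coe_algebraMap, RCLike.star_def]; ring

theorem trace_diagonal_mul {R : Type*} [NonUnitalNonAssocSemiring R] (p : n → R)
    (M : Matrix n n R) : (diagonal p * M).trace = ∑ i, p i * M i i := by
  simp [trace, diagonal_mul]

theorem trace_exp_conj_diagonal {U : Matrix n n ℂ} (hU : U ∈ unitaryGroup n ℂ) (v : n → ℂ) :
    (NormedSpace.exp (U * diagonal v * star U)).trace = ∑ i, Complex.exp (v i) := by
  have hU' : star U * U = 1 := mem_unitaryGroup_iff'.mp hU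
  rw [← inv_eq_left_inv hU', Matrix.exp_conj U _ (Unitary.toUnits ⟨U, hU⟩).isUnit, exp_diagonal,
    trace_mul_cycle, inv_eq_left_inv hU', hU', one_mul, trace_diagonal]
  simp [Complex.exp_eq_exp_ℂ]

theorem Matrix.IsHermitian.re_trace_exp_neg {H : Matrix n n ℂ} (hH : H.IsHermitian) :
    (NormedSpace.exp (-H)).trace.re = ∑ j, Real.exp (-hH.eigenvalues j) := by
  have hneg : -H = hH.eigenvectorUnitary * diagonal (fun j => ((-hH.eigenvalues j : ℝ) : ℂ))
      * star (hH.eigenvectorUnitary : Matrix n n ℂ) := by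
    conv_lhs => rw [hH.spectral_theorem]
    simp [← diagonal_neg, Function.comp_def]
  rw [hneg, trace_exp_conj_diagonal hH.eigenvectorUnitary.2, re_sum]
  simp only [exp_ofReal_re]

theorem Matrix.IsHermitian.re_trace_mul_eq_sum {ρ H : Matrix n n ℂ} (hρ : ρ.IsHermitian)
    (hH : H.IsHermitian) :
    (ρ * H).trace.re = ∑ i, hρ.eigenvalues i *
      ((star (hρ.eigenvectorUnitary : Matrix n n ℂ) * hH.eigenvectorUnitary).map normSq
        *ᵥ hH.eigenvalues) i := by
  set U : Matrix n n ℂ := ↑hρ.eigenvectorUnitary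
  set V : Matrix n n ℂ := ↑hH.eigenvectorUnitary
  have hconj : (ρ * H).trace = (diagonal (RCLike.ofReal ∘ hρ.eigenvalues) *
      ((star U * V) * diagonal (RCLike.ofReal ∘ hH.eigenvalues) * star (star U * V))).trace := by
    conv_lhs => rw [hρ.spectral_theorem, hH.spectral_theorem]
    rw [star_mul, star_star]
    simp only [Unitary.conjStarAlgAut_apply, Matrix.mul_assoc]
    rw [trace_mul_comm]
    simp only [Matrix.mul_assoc]
    rfl
  rw [hconj, trace_diagonal_mul, re_sum]
  refine Finset.sum_congr rfl fun i _ => ?_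
  rw [mul_diagonal_mul_star_apply_self]
  simp

theorem Matrix.PosSemidef.sum_eigenvalues_eq_one {ρ : Matrix n n ℂ} (hρ : ρ.PosSemidef)
    (hρtr : ρ.trace = 1) : ∑ i, hρ.1.eigenvalues i = 1 := by
  simpa using congrArg re (hρ.1.trace_eq_sum_eigenvalues.symm.trans hρtr)

theorem entropy_sub_log_re_trace_exp_neg_le {ρ H : Matrix n n ℂ} (hρ : ρ.PosSemidef)
    (hρtr : ρ.trace = 1) (hH : H.IsHermitian) :
    -(∑ i, hρ.1.eigenvalues i * Real.log (hρ.1.eigenvalues i))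
      - Real.log (NormedSpace.exp (-H)).trace.re ≤ (ρ * H).trace.re := by
  set P := (star (hρ.1.eigenvectorUnitary : Matrix n n ℂ) * hH.eigenvectorUnitary).map normSq
  have hP : P ∈ doublyStochastic ℝ n :=
    map_normSq_mem_doublyStochastic (hρ.1.eigenvectorUnitary⁻¹ * hH.eigenvectorUnitary).2
  have hpeierls :
      ∑ i, Real.exp (-(P *ᵥ hH.eigenvalues) i) ≤ ∑ j, Real.exp (-hH.eigenvalues j) := by
    simpa only [mulVec_neg, Pi.neg_apply] using
      convexOn_exp.sum_map_mulVec_le hP (x := -hH.eigenvalues) (fun _ => Set.mem_univ _)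
  have hsum := hρ.sum_eigenvalues_eq_one hρtr
  have hgibbs := neg_sum_mul_log_sub_log_sum_exp_le _ (P *ᵥ hH.eigenvalues)
    hρ.eigenvalues_nonneg hsum
  have hlog := Real.log_le_log (Finset.sum_pos (fun i _ => Real.exp_pos _)
    (Finset.nonempty_of_sum_ne_zero (hsum ▸ one_ne_zero))) hpeierls
  rw [hρ.1.re_trace_mul_eq_sum hH, hH.re_trace_exp_neg]
  linarith

end Matrix

section Uncertainty

variable {n R : Type*} [Fintype n] [DecidableEq n] [CommRing R]

omit [DecidableEq n] in
theorem star_trace_mul_of_isHermitian [StarRing R] {ρ A : Matrix n n R} (hρ : ρ.IsHermitian)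
    (hA : A.IsHermitian) : star (ρ * A).trace = (ρ * A).trace := by
  rw [← trace_conjTranspose, conjTranspose_mul, hA.eq, hρ.eq, trace_mul_comm]

omit [Fintype n] in
theorem Matrix.IsHermitian.sub_smul_one [StarRing R] {A : Matrix n n R} (hA : A.IsHermitian)
    {a : R} (ha : star a = a) : (A - a • 1).IsHermitian :=
  hA.sub (IsSelfAdjoint.smul ha isHermitian_one)

theorem trace_mul_sub_smul_one_mul_self {ρ : Matrix n n R} (hρtr : ρ.trace = 1)
    (X : Matrix n n R) :
    (ρ * ((X - (ρ * X).trace • 1) * (X - (ρ * X).trace • 1))).trace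
      = (ρ * (X * X)).trace - (ρ * X).trace ^ 2 := by
  simp only [Matrix.sub_mul, Matrix.mul_sub, Matrix.smul_mul, Matrix.mul_smul, Matrix.one_mul,
    Matrix.mul_one, trace_sub, trace_smul, hρtr, smul_eq_mul]
  ring

theorem sub_smul_one_commutator (A B : Matrix n n R) (a b : R) :
    (A - a • 1) * (B - b • 1) - (B - b • 1) * (A - a • 1) = A * B - B * A := by
  simp only [Matrix.sub_mul, Matrix.mul_sub, Matrix.smul_mul, Matrix.mul_smul,
    Matrix.mul_one, Matrix.one_mul]
  module

omit [DecidableEq n] in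
theorem sub_smul_mul_add_smul_of_mul_self_eq_neg_one {t : R} (ht : t * t = -1)
    (C D : Matrix n n R) :
    (C - t • D) * (C + t • D) = C * C + D * D + t • (C * D - D * C) := by
  simp only [Matrix.sub_mul, Matrix.mul_add, Matrix.smul_mul, Matrix.mul_smul]
  linear_combination (norm := module) -(ht • (D * D))

end Uncertainty

theorem stmt4 {d : ℕ} (ρ : Matrix (Fin d) (Fin d) ℂ)
    (hρ : ρ.PosSemidef) (hρtr : ρ.trace = 1)
    (A B : Matrix (Fin d) (Fin d) ℂ) (hA : A.IsHermitian) (hB : B.IsHermitian)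
    (s : ℂ) (hs : s = 1 ∨ s = -1)
    (hsign : s * Complex.I * (ρ * (A * B - B * A)).trace
      = -(‖(ρ * (A * B - B * A)).trace‖ : ℂ))
    (C D K : Matrix (Fin d) (Fin d) ℂ)
    (hC : C = A - (ρ * A).trace • (1 : Matrix (Fin d) (Fin d) ℂ))
    (hD : D = B - (ρ * B).trace • (1 : Matrix (Fin d) (Fin d) ℂ))
    (hK : K = (C - (s * Complex.I) • D) * (C + (s * Complex.I) • D)) :
    ((ρ * (A * A)).trace - (ρ * A).trace ^ 2).re
      + ((ρ * (B * B)).trace - (ρ * B).trace ^ 2).re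
    ≥ ‖(ρ * (A * B - B * A)).trace‖
      + (-(∑ i, (hρ.1.eigenvalues i) * Real.log (hρ.1.eigenvalues i)))
      - Real.log (((NormedSpace.exp (-K)).trace).re) := by
  obtain ⟨hstar, hsq⟩ : star (s * I) = -(s * I) ∧ s * I * (s * I) = -1 := by
    rcases hs with rfl | rfl <;> simp
  have hCH : C.IsHermitian := hC ▸ hA.sub_smul_one (star_trace_mul_of_isHermitian hρ.1 hA)
  have hDH : D.IsHermitian := hD ▸ hB.sub_smul_one (star_trace_mul_of_isHermitian hρ.1 hB)
  have hKH : K.IsHermitian := by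
    have hKN : K = (C + (s * I) • D)ᴴ * (C + (s * I) • D) := by
      rw [hK, conjTranspose_add, conjTranspose_smul, hCH.eq, hDH.eq, hstar, neg_smul,
        sub_eq_add_neg]
    exact hKN ▸ isHermitian_conjTranspose_mul_self _
  have htrK : (ρ * K).trace = ((ρ * (A * A)).trace - (ρ * A).trace ^ 2)
      + ((ρ * (B * B)).trace - (ρ * B).trace ^ 2) - ‖(ρ * (A * B - B * A)).trace‖ := by
    rw [hK, sub_smul_mul_add_smul_of_mul_self_eq_neg_one hsq, hC, hD, sub_smul_one_commutator,
      Matrix.mul_add, Matrix.mul_add, trace_add, trace_add, trace_mul_sub_smul_one_mul_self hρtr,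
      trace_mul_sub_smul_one_mul_self hρtr, Matrix.mul_smul, trace_smul, smul_eq_mul, hsign]
    ring
  have hgibbs := entropy_sub_log_re_trace_exp_neg_le hρ hρtr hKH
  rw [htrK, sub_re, add_re, ofReal_re] at hgibbs
  linarith
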